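/- arXiv:0907.1809 — 8 statements merged into one kernel-verified Lean document; each statement's English description precedes it below -/
import Mathlib

section
/- Let T be an admissible tree with 2k vertices (k ≥ 1). Then the number of loose ends of T is congruent to k+1 modulo 2. -/
/-- A loose end of an admissible tree: a leaf `v` such that the number of leaves
other than `v` adjacent to the unique neighbour of `v` is even. -/
def SimpleGraph.LooseEnd {V : Type*} [Fintype V] [DecidableEq V]
    (G : SimpleGraph V) [DecidableRel G.Adj] (v : V) : Prop :=
  G.degree v = 1 ∧
    ∃ u : V, G.Adj v u ∧
      Even ((G.neighborFinset u).filter fun w => G.degree w = 1 ∧ w ≠ v).card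

/-- An admissible tree with `2 * k` vertices (`k ≥ 1`) has a number of
loose ends congruent to `k + 1` modulo 2. -/
theorem admissible_tree_loose_ends_parity {V : Type*} [Fintype V] [DecidableEq V] [Nonempty V]
    (G : SimpleGraph V) [DecidableRel G.Adj] (hT : G.IsTree)
    (hdeg : ∀ v : V, G.degree v = 1 ∨ G.degree v = 3)
    (k : ℕ) (hk : 1 ≤ k) (hcard : Fintype.card V = 2 * k) :
    Nat.card {v : V // G.LooseEnd v} ≡ k + 1 [MOD 2] := by
  classical
  -- every vertex has a neighbour
  have hne : ∀ v : V, (G.neighborFinset v).Nonempty := by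
    intro v
    rw [← Finset.card_pos, G.card_neighborFinset_eq_degree]
    rcases hdeg v with h | h <;> omega
  choose f hf using hne
  have hadj : ∀ v : V, G.Adj v (f v) := fun v => (G.mem_neighborFinset v (f v)).mp (hf v)
  -- uniqueness of the neighbour of a leaf
  have huniq : ∀ v u : V, G.degree v = 1 → G.Adj v u → u = f v := by
    intro v u h1 hadj'
    have hcard1 : (G.neighborFinset v).card = 1 := by
      rw [G.card_neighborFinset_eq_degree]; exact h1
    obtain ⟨w, hw⟩ := Finset.card_eq_one.mp hcard1
    have h1' : f v ∈ ({w} : Finset V) := hw ▸ hf v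
    have h2' : u ∈ ({w} : Finset V) := hw ▸ (G.mem_neighborFinset v u).mpr hadj'
    rw [Finset.mem_singleton] at h1' h2'
    rw [h2', h1']
  set A : V → Finset V := fun u => (G.neighborFinset u).filter (fun w => G.degree w = 1)
    with hA
  -- characterization of loose ends
  have hchar : ∀ v : V, G.LooseEnd v ↔ G.degree v = 1 ∧ Odd (A (f v)).card := by
    intro v
    constructor
    · rintro ⟨h1, u, hu, heven⟩
      refine ⟨h1, ?_⟩
      have hufv : u = f v := huniq v u h1 hu
      subst hufv
      have hvmem : v ∈ A (f v) := by
        simp only [hA, Finset.mem_filter, SimpleGraph.mem_neighborFinset]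
        exact ⟨hu.symm, h1⟩
      have hfeq : (G.neighborFinset (f v)).filter (fun w => G.degree w = 1 ∧ w ≠ v)
          = (A (f v)).erase v := by
        ext w
        simp only [hA, Finset.mem_filter, Finset.mem_erase]
        tauto
      rw [hfeq, Finset.card_erase_of_mem hvmem] at heven
      have hpos : 1 ≤ (A (f v)).card := Finset.card_pos.mpr ⟨v, hvmem⟩
      rw [Nat.even_iff] at heven
      rw [Nat.odd_iff]
      omega
    · rintro ⟨h1, hodd⟩
      refine ⟨h1, f v, hadj v, ?_⟩
      have hvmem : v ∈ A (f v) := by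
        simp only [hA, Finset.mem_filter, SimpleGraph.mem_neighborFinset]
        exact ⟨(hadj v).symm, h1⟩
      have hfeq : (G.neighborFinset (f v)).filter (fun w => G.degree w = 1 ∧ w ≠ v)
          = (A (f v)).erase v := by
        ext w
        simp only [hA, Finset.mem_filter, Finset.mem_erase]
        tauto
      rw [hfeq, Finset.card_erase_of_mem hvmem]
      rw [Nat.odd_iff] at hodd
      rw [Nat.even_iff]
      omega
  set Leaves : Finset V := Finset.univ.filter (fun v => G.degree v = 1) with hLdef
  -- leaf count is k + 1
  have hLcard : Leaves.card = k + 1 := by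
    have hsum : ∑ v : V, G.degree v = 2 * (2 * k - 1) := by
      rw [G.sum_degrees_eq_twice_card_edges]
      have := hT.card_edgeFinset
      omega
    have hsplit : (∑ v ∈ Finset.univ.filter (fun v => G.degree v = 1), G.degree v)
        + ∑ v ∈ Finset.univ.filter (fun v => ¬ G.degree v = 1), G.degree v
        = ∑ v : V, G.degree v :=
      Finset.sum_filter_add_sum_filter_not Finset.univ _ _
    have h1 : ∑ v ∈ Finset.univ.filter (fun v => G.degree v = 1), G.degree v
        = Leaves.card := by
      rw [hLdef, Finset.card_eq_sum_ones]
      exact Finset.sum_congr rfl (fun v hv => (Finset.mem_filter.mp hv).2)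
    have h3 : ∑ v ∈ Finset.univ.filter (fun v => ¬ G.degree v = 1), G.degree v
        = 3 * (Finset.univ.filter (fun v => ¬ G.degree v = 1)).card := by
      rw [Finset.card_eq_sum_ones, Finset.mul_sum]
      exact Finset.sum_congr rfl (fun v hv => by
        have := (hdeg v).resolve_left (Finset.mem_filter.mp hv).2
        omega)
    have hparts := Finset.card_filter_add_card_filter_not
      (s := (Finset.univ : Finset V)) (p := fun v => G.degree v = 1)
    rw [Finset.card_univ, hcard] at hparts
    rw [h1, h3] at hsplit
    rw [← hLdef] at hparts
    omega
  -- the number of loose ends equals the card of the odd-fiber leaves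
  have hNat : Nat.card {v : V // G.LooseEnd v}
      = (Leaves.filter (fun v => Odd (A (f v)).card)).card := by
    rw [Nat.card_eq_fintype_card, Fintype.card_subtype]
    congr 1
    ext v
    simp only [hLdef, Finset.mem_filter, Finset.mem_univ, true_and, hchar v, and_assoc]
  -- leaves with an even fiber: fiberwise counting
  set C : Finset V := Leaves.filter (fun v => ¬ Odd (A (f v)).card) with hCdef
  have hCeven : Even C.card := by
    have hmap : ∀ v ∈ C, f v ∈ Finset.univ.filter (fun u => ¬ Odd (A u).card) := by
      intro v hv
      simp only [Finset.mem_filter, Finset.mem_univ, true_and]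
      exact (Finset.mem_filter.mp hv).2
    rw [Finset.card_eq_sum_card_fiberwise hmap]
    refine Finset.even_sum _ (fun u hu => ?_)
    have hueven : Even (A u).card :=
      Nat.not_odd_iff_even.mp (Finset.mem_filter.mp hu).2
    have hfib : C.filter (fun v => f v = u) = A u := by
      ext v
      simp only [hCdef, hLdef, hA, Finset.mem_filter, Finset.mem_univ, true_and,
        SimpleGraph.mem_neighborFinset]
      constructor
      · rintro ⟨⟨h1, -⟩, hfv⟩
        exact ⟨hfv ▸ (hadj v).symm, h1⟩
      · rintro ⟨hadj', h1⟩
        have hfv : u = f v := huniq v u h1 hadj'.symm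
        refine ⟨⟨h1, ?_⟩, hfv.symm⟩
        rw [← hfv]
        exact Nat.not_odd_iff_even.mpr hueven
    rw [hfib]
    exact hueven
  -- conclude
  have hsplitL := Finset.card_filter_add_card_filter_not
    (s := Leaves) (p := fun v => Odd (A (f v)).card)
  rw [hNat]
  rw [← hCdef, hLcard] at hsplitL
  rw [Nat.even_iff] at hCeven
  rw [Nat.ModEq]
  omega
end

section
/- Let T be an admissible tree whose number of vertices is divisible by 4. Then T has at least one loose end. -/
private theorem aux_no_loose_end_false {V : Type*} [Fintype V] [DecidableEq V] [Nonempty V]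
    (G : SimpleGraph V) [DecidableRel G.Adj] (hT : G.IsTree)
    (hdeg : ∀ v : V, G.degree v = 1 ∨ G.degree v = 3)
    (hcard : 4 ∣ Fintype.card V)
    (h : ∀ v : V, G.degree v = 1 → ∀ u : V, G.Adj v u →
      ¬ Even ((G.neighborFinset u).filter fun w => G.degree w = 1 ∧ w ≠ v).card) :
    False := by
  classical
  set L := (Finset.univ.filter fun v : V => G.degree v = 1).card with hL
  -- Step 1: 2 * L = Fintype.card V + 2
  have hedge : G.edgeFinset.card + 1 = Fintype.card V := hT.card_edgeFinset
  have hsumdeg : ∑ v, G.degree v = 2 * G.edgeFinset.card :=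
    G.sum_degrees_eq_twice_card_edges
  have hsplit : ∑ v, G.degree v + 2 * L = 3 * Fintype.card V := by
    rw [← Finset.sum_filter_add_sum_filter_not Finset.univ (fun v => G.degree v = 1) (fun v => G.degree v)]
    have h1 : ∑ v ∈ Finset.univ.filter (fun v : V => G.degree v = 1), G.degree v = L := by
      rw [hL, Finset.card_eq_sum_ones]
      exact Finset.sum_congr rfl fun v hv => (Finset.mem_filter.mp hv).2
    have h2 : ∑ v ∈ Finset.univ.filter (fun v : V => ¬ G.degree v = 1), G.degree v
        = 3 * (Fintype.card V - L) := by
      have hc : (Finset.univ.filter fun v : V => ¬ G.degree v = 1).card = Fintype.card V - L := by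
        have := Finset.card_filter_add_card_filter_not
          (s := (Finset.univ : Finset V)) (p := fun v => G.degree v = 1)
        simp only [Finset.card_univ] at this
        omega
      rw [Finset.sum_congr rfl (fun v hv => ?_), Finset.sum_const, hc, smul_eq_mul, mul_comm]
      have := hdeg v
      have := (Finset.mem_filter.mp hv).2
      omega
    have hLle : L ≤ Fintype.card V := by
      rw [hL, ← Finset.card_univ]; exact Finset.card_filter_le _ _
    rw [h1, h2]; omega
  have hn1 : 1 ≤ Fintype.card V := Fintype.card_pos
  have hLodd : ¬ Even L := by
    obtain ⟨k, hk⟩ := hcard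
    rw [Nat.even_iff]
    omega
  -- Step 2: every vertex has an even number of leaf neighbours
  have hev : ∀ u : V, Even ((G.neighborFinset u).filter fun w => G.degree w = 1).card := by
    intro u
    by_cases hne : ∃ v ∈ (G.neighborFinset u), G.degree v = 1
    · obtain ⟨v, hv, hdv⟩ := hne
      rw [SimpleGraph.mem_neighborFinset] at hv
      have hodd := h v hdv u hv.symm
      have hins : (G.neighborFinset u).filter (fun w => G.degree w = 1)
          = insert v ((G.neighborFinset u).filter fun w => G.degree w = 1 ∧ w ≠ v) := by
        ext w
        simp only [Finset.mem_filter, Finset.mem_insert, SimpleGraph.mem_neighborFinset]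
        constructor
        · rintro ⟨haw, hdw⟩
          by_cases hwv : w = v
          · exact Or.inl hwv
          · exact Or.inr ⟨haw, hdw, hwv⟩
        · rintro (rfl | ⟨haw, hdw, _⟩)
          · exact ⟨hv, hdv⟩
          · exact ⟨haw, hdw⟩
      rw [hins, Finset.card_insert_of_notMem (by simp)]
      rw [Nat.even_add_one]
      simpa using hodd
    · push_neg at hne
      have : (G.neighborFinset u).filter (fun w => G.degree w = 1) = ∅ := by
        rw [Finset.filter_eq_empty_iff]; exact hne
      rw [this]; simp
  -- Step 3: double counting
  have hdc : ∑ u : V, ((G.neighborFinset u).filter fun w => G.degree w = 1).card = L := by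
    have step1 : ∀ u : V, ((G.neighborFinset u).filter fun w => G.degree w = 1).card
        = ∑ w : V, if G.Adj u w ∧ G.degree w = 1 then 1 else 0 := by
      intro u
      rw [SimpleGraph.neighborFinset_eq_filter, Finset.filter_filter, Finset.card_filter]
    simp_rw [step1]
    rw [Finset.sum_comm]
    have step2 : ∀ w : V, (∑ u : V, if G.Adj u w ∧ G.degree w = 1 then 1 else 0)
        = if G.degree w = 1 then 1 else 0 := by
      intro w
      by_cases hw : G.degree w = 1
      · simp only [hw, and_true, if_true]
        have hd : (∑ u : V, if G.Adj u w then 1 else 0) = G.degree w := by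
          rw [SimpleGraph.degree, SimpleGraph.neighborFinset_eq_filter, Finset.card_filter]
          refine Finset.sum_congr rfl fun u _ => ?_
          simp [SimpleGraph.adj_comm]
        rw [hd, hw]
      · simp [hw]
    simp_rw [step2]
    rw [hL, Finset.card_filter]
  exact hLodd (by rw [← hdc]
                  exact Finset.even_sum _ fun u _ => hev u)


/-- An admissible tree whose number of vertices is divisible by 4
has at least one loose end. -/
theorem admissible_tree_has_loose_end {V : Type*} [Fintype V] [DecidableEq V] [Nonempty V]
    (G : SimpleGraph V) [DecidableRel G.Adj] (hT : G.IsTree)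
    (hdeg : ∀ v : V, G.degree v = 1 ∨ G.degree v = 3)
    (hcard : 4 ∣ Fintype.card V) :
    ∃ v : V, G.LooseEnd v := by
  by_contra hno
  push_neg at hno
  refine aux_no_loose_end_false G hT hdeg hcard fun v hv u hu hEven => ?_
  exact hno v ⟨hv, u, hu, hEven⟩
end

section
/- For every admissible distance sequence (m_1, …, m_k), the lattice Q(m) is isometric to W_k; that is, there is a group isomorphism Q(m) → W_k preserving the bilinear forms. -/
/-- Admissible distance sequences: the sequences of vertex distances between
consecutive leaves of marked admissible trees with `2 k` vertices. -/
inductive AdmSeq : List ℤ → Prop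
  | base : AdmSeq [2]
  | left (a : ℤ) (l : List ℤ) : AdmSeq (a :: l) → AdmSeq (3 :: (a + 1) :: l)
  | right (l : List ℤ) (a : ℤ) : AdmSeq (l ++ [a]) → AdmSeq (l ++ [a + 1, 3])
  | mid (l₁ : List ℤ) (a b : ℤ) (l₂ : List ℤ) :
      AdmSeq (l₁ ++ a :: b :: l₂) → AdmSeq (l₁ ++ (a + 1) :: 3 :: (b + 1) :: l₂)

/-- The bilinear form of the lattice `Q(m)`: `qᵢ·qᵢ = mᵢ - 2`, `qᵢ·qᵢ₊₁ = 1`,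
and `qᵢ·qⱼ = 0` for `|i - j| ≥ 2`. -/
def QForm (m : List ℤ) (x y : Fin m.length → ℤ) : ℤ :=
  ∑ i, ∑ j,
    (if i = j then m.get i - 2
      else if (i : ℕ) + 1 = (j : ℕ) ∨ (j : ℕ) + 1 = (i : ℕ) then 1 else 0) * x i * y j

/-- The bilinear form of the lattice `W k = ⟨v₁,…,v_{k-1}⟩ ⊕ ⟨w⟩` with
`vᵢ·vⱼ = δᵢⱼ`, `vᵢ·w = 0`, `w·w = 0` (the last coordinate being `w`). -/
def WForm (k : ℕ) (x y : Fin k → ℤ) : ℤ :=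
  ∑ i : Fin k, if (i : ℕ) < k - 1 then x i * y i else 0

/-! If `m'` arises from `m` by inserting `3` at position `t`, the basis vector `q = q_t` of `Q(m')`
has `q·q = 1`, so `Q(m') = ⟨q⟩ ⊥ q^⊥`. The vectors `q_{t-1} - q`, `q - q_{t+1}`, `q_j` for
`j < t - 1` and `-q_j` for `j > t + 1` form a basis of `q^⊥` with the Gram matrix of `Q(m)`, so
`Q(m') ≅ Q(m) ⊥ ⟨1⟩`. Since also `W_{k+1} ≅ W_k ⊥ ⟨1⟩` for `k ≥ 1`, the theorem follows by
induction on admissibility. -/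

section FormIso

variable {M N P : Type*} [AddCommGroup M] [AddCommGroup N] [AddCommGroup P]

def FormIso (B : M → M → ℤ) (C : N → N → ℤ) : Prop :=
  ∃ e : M ≃+ N, ∀ x y, C (e x) (e y) = B x y

/-- `B ⊥ ⟨1⟩`. -/
def unitSum (B : M → M → ℤ) (x y : M × ℤ) : ℤ := B x.1 y.1 + x.2 * y.2

theorem FormIso.trans {B : M → M → ℤ} {C : N → N → ℤ} {D : P → P → ℤ}
    (h₁ : FormIso B C) (h₂ : FormIso C D) : FormIso B D := by
  obtain ⟨e₁, he₁⟩ := h₁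
  obtain ⟨e₂, he₂⟩ := h₂
  exact ⟨e₁.trans e₂, fun x y => (he₂ _ _).trans (he₁ x y)⟩

theorem FormIso.unitSum_congr {B : M → M → ℤ} {C : N → N → ℤ} (h : FormIso B C) :
    FormIso (unitSum B) (unitSum C) := by
  obtain ⟨e, he⟩ := h
  exact ⟨e.prodCongr (AddEquiv.refl ℤ), fun x y => congrArg (· + x.2 * y.2) (he x.1 y.1)⟩

end FormIso

theorem QForm_cons_cons (c a : ℤ) (l : List ℤ) (x₀ y₀ : ℤ) (x y : Fin (l.length + 1) → ℤ) :
    QForm (c :: a :: l) (Fin.cons x₀ x) (Fin.cons y₀ y) =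
      (c - 2) * x₀ * y₀ + x₀ * y 0 + x 0 * y₀ + QForm (a :: l) x y := by
  change ∑ i : Fin (l.length + 2), ∑ j : Fin (l.length + 2), _ = _
  simp only [Fin.sum_univ_succ (n := l.length + 1), Fin.cons_zero, Fin.cons_succ]
  simp [Fin.succ_ne_zero, (Fin.succ_ne_zero _).symm, Fin.val_eq_zero_iff, QForm,
    Finset.sum_add_distrib]
  ring

theorem QForm_singleton (c : ℤ) (x y : Fin 1 → ℤ) : QForm [c] x y = (c - 2) * x 0 * y 0 := by
  simp [QForm]

theorem QForm_neg (m : List ℤ) (x y : Fin m.length → ℤ) : QForm m (-x) (-y) = QForm m x y := by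
  simp [QForm]

theorem QForm_cons_add_one (a : ℤ) (l : List ℤ) (x y : Fin (l.length + 1) → ℤ) :
    QForm ((a + 1) :: l) x y = QForm (a :: l) x y + x 0 * y 0 := by
  cases l with
  | nil => simp only [QForm_singleton]; ring
  | cons b l =>
    induction x using Fin.consCases
    induction y using Fin.consCases
    simp only [QForm_cons_cons, Fin.cons_zero]
    ring

theorem WForm_cons (n : ℕ) (s t : ℤ) (x y : Fin (n + 1) → ℤ) :
    WForm (n + 2) (Fin.cons s x) (Fin.cons t y) = s * t + WForm (n + 1) x y := by
  simp [WForm, Fin.sum_univ_succ (n := n + 1)]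

theorem formIso_unitSum_WForm (n : ℕ) : FormIso (unitSum (WForm (n + 1))) (WForm (n + 2)) :=
  ⟨AddEquiv.prodComm.trans (Fin.consLinearEquiv ℤ fun _ => ℤ).toAddEquiv, fun x y =>
    (WForm_cons n x.2 y.2 x.1 y.1).trans (add_comm _ _)⟩

theorem formIso_QForm_left (a : ℤ) (l : List ℤ) :
    FormIso (QForm (3 :: (a + 1) :: l)) (unitSum (QForm (a :: l))) := by
  let e : (Fin (l.length + 2) → ℤ) ≃+ (Fin (l.length + 1) → ℤ) × ℤ :=
    { toFun x := (-Fin.tail x, x 0 + x 1)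
      invFun p := Fin.cons (p.2 + p.1 0) (-p.1)
      left_inv x := by simp [Fin.tail]
      right_inv p := by ext <;> simp
      map_add' x y := by ext <;> simp [Fin.tail] <;> ring }
  refine ⟨e, fun x y => ?_⟩
  induction x using Fin.consCases with | cons x₀ x => ?_
  induction y using Fin.consCases with | cons y₀ y => ?_
  simp [e, unitSum, QForm_neg (a :: l), QForm_cons_cons, QForm_cons_add_one]
  ring

/-- Keeping the first coordinate is what lets the splitting survive prepending a common entry
(`HeadSplit.cons`). -/
def HeadSplit (a' : ℤ) (l' : List ℤ) (a : ℤ) (l : List ℤ) : Prop :=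
  ∃ e : (Fin (l'.length + 1) → ℤ) ≃+ (Fin (l.length + 1) → ℤ) × ℤ,
    (∀ x, (e x).1 0 = x 0) ∧
      ∀ x y, unitSum (QForm (a :: l)) (e x) (e y) = QForm (a' :: l') x y

namespace HeadSplit

variable {a a' : ℤ} {l l' : List ℤ}

theorem formIso (h : HeadSplit a' l' a l) :
    FormIso (QForm (a' :: l')) (unitSum (QForm (a :: l))) :=
  let ⟨e, _, he⟩ := h; ⟨e, he⟩

theorem cons (c : ℤ) (h : HeadSplit a' l' a l) : HeadSplit c (a' :: l') c (a :: l) := by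
  obtain ⟨e, he₀, he⟩ := h
  let consEquiv (n : ℕ) := (Fin.consLinearEquiv ℤ fun _ : Fin (n + 1) => ℤ).toAddEquiv
  let E := (consEquiv _).symm.trans (((AddEquiv.refl ℤ).prodCongr e).trans
    (AddEquiv.prodAssoc.symm.trans ((consEquiv _).prodCongr (AddEquiv.refl ℤ))))
  have hE : ∀ x₀ x, E (Fin.cons x₀ x) = (Fin.cons x₀ (e x).1, (e x).2) := fun _ _ => rfl
  refine ⟨E, fun x => ?_, fun x y => ?_⟩
  · induction x using Fin.consCases with | cons x₀ x => rw [hE]; rfl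
  induction x using Fin.consCases with | cons x₀ x => ?_
  induction y using Fin.consCases with | cons y₀ y => ?_
  rw [hE, hE, QForm_cons_cons, ← he x y]
  simp only [unitSum, QForm_cons_cons, he₀]
  ring

theorem append (h : HeadSplit a' l' a l) (c : ℤ) (l₁ : List ℤ) :
    HeadSplit c (l₁ ++ a' :: l') c (l₁ ++ a :: l) := by
  induction l₁ generalizing c with
  | nil => exact h.cons c
  | cons d l₁ ih => exact (ih d).cons c

theorem formIso_append (h : HeadSplit a' l' a l) (l₁ : List ℤ) :
    FormIso (QForm (l₁ ++ a' :: l')) (unitSum (QForm (l₁ ++ a :: l))) := by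
  cases l₁ with
  | nil => exact h.formIso
  | cons c l₁ => exact (h.append c l₁).formIso

end HeadSplit

@[simp]
theorem Fin.cons_cons_two {α : Type*} {n : ℕ} (x₀ x₁ : α) (x : Fin (n + 1) → α) :
    (Fin.cons x₀ (Fin.cons x₁ x) : Fin (n + 3) → α) 2 = x 0 :=
  rfl

theorem headSplit_mid (a b : ℤ) (l : List ℤ) :
    HeadSplit (a + 1) (3 :: (b + 1) :: l) a (b :: l) := by
  let e : (Fin (l.length + 3) → ℤ) ≃+ (Fin (l.length + 2) → ℤ) × ℤ :=
    { toFun x := (Fin.cons (x 0) (-Fin.tail (Fin.tail x)), x 0 + x 1 + x 2)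
      invFun p := Fin.cons (p.1 0) (Fin.cons (p.2 - p.1 0 + p.1 1) (-Fin.tail p.1))
      left_inv x := by
        ext i
        refine Fin.cases ?_ (Fin.cases ?_ fun i => ?_) i <;> simp [Fin.tail]
        ring
      right_inv p := by
        ext i
        · refine Fin.cases ?_ (fun i => ?_) i <;> simp [Fin.tail]
        · simp [Fin.tail]; ring
      map_add' x y := by
        ext i
        · refine Fin.cases ?_ (fun i => ?_) i <;> simp [Fin.tail]; ring
        · simp; ring }
  refine ⟨e, fun x => rfl, fun x y => ?_⟩
  induction x using Fin.consCases with | cons x₀ x => ?_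
  induction x using Fin.consCases with | cons x₁ x => ?_
  induction y using Fin.consCases with | cons y₀ y => ?_
  induction y using Fin.consCases with | cons y₁ y => ?_
  simp [e, unitSum, QForm_neg (b :: l), QForm_cons_cons, QForm_cons_add_one]
  ring

theorem headSplit_right (a : ℤ) : HeadSplit (a + 1) [3] a [] := by
  let e : (Fin 2 → ℤ) ≃+ (Fin 1 → ℤ) × ℤ :=
    { toFun x := (fun _ => x 0, x 0 + x 1)
      invFun p := ![p.1 0, p.2 - p.1 0]
      left_inv x := by ext i; fin_cases i <;> simp
      right_inv p := by ext <;> simp [Fin.fin_one_eq_zero]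
      map_add' x y := by ext <;> simp; ring }
  refine ⟨e, fun x => rfl, fun x y => ?_⟩
  induction x using Fin.consCases with | cons x₀ x => ?_
  induction y using Fin.consCases with | cons y₀ y => ?_
  simp [e, unitSum, QForm_singleton, QForm_cons_cons]
  ring

theorem formIso_WForm_of_eq {n n' : ℕ} (h : n = n') : FormIso (WForm n) (WForm n') :=
  h ▸ ⟨AddEquiv.refl _, fun _ _ => rfl⟩

theorem formIso_QForm_WForm_of_split {m m' : List ℤ} (ih : FormIso (QForm m) (WForm m.length))
    (split : FormIso (QForm m') (unitSum (QForm m))) (hpos : 0 < m.length)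
    (hlen : m'.length = m.length + 1) : FormIso (QForm m') (WForm m'.length) := by
  obtain ⟨n, hn⟩ : ∃ n, m.length = n + 1 := Nat.exists_eq_add_one.mpr hpos
  exact split.trans <| ih.unitSum_congr.trans <| (formIso_WForm_of_eq hn).unitSum_congr.trans <|
    (formIso_unitSum_WForm n).trans (formIso_WForm_of_eq (by omega))

/-- for every admissible distance sequence `m`, the lattice `Q(m)` is
isometric to `W k`. -/
theorem Q_isometric_W (m : List ℤ) (hm : AdmSeq m) :
    ∃ e : (Fin m.length → ℤ) ≃+ (Fin m.length → ℤ),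
      ∀ x y : Fin m.length → ℤ, WForm m.length (e x) (e y) = QForm m x y := by
  induction hm with
  | base => exact ⟨AddEquiv.refl _, fun x y => by simp [QForm, WForm]⟩
  | left a l _ ih => exact formIso_QForm_WForm_of_split ih (formIso_QForm_left a l) (by simp) rfl
  | right l a _ ih =>
    exact formIso_QForm_WForm_of_split ih ((headSplit_right a).formIso_append l) (by simp) (by simp)
  | mid l₁ a b l₂ _ ih =>
    exact formIso_QForm_WForm_of_split ih ((headSplit_mid a b l₂).formIso_append l₁) (by simp)
      (by simp; omega)
end

section
/- For every admissible distance sequence (m_1, …, m_k) with k ≥ 3, the entries are coprime: gcd(m_1, …, m_k) = 1. -/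
/-!
Subtracting 2 from an admissible sequence gives the numbers of triangles at the vertices
`1, …, k` of a triangulated polygon with vertices `0, …, k`, and each rule adds an ear.
Cut such a polygon along the triangle on the edge `(0, k)` into two smaller rooted ones.
By induction, if every vertex off the root edge lies in `1 (mod 3)` triangles, the polygon
is an edge or a triangle: gluing two pieces whose end counts lie in `{0, 1}` makes the
apex count `≡ 1` only when both pieces are edges. Hence for `k ≥ 3` some entry is prime
to `3`, while every sequence but `(2)` contains a `3`.
-/

theorem List.foldr_gcd_dvd {l : List ℕ} {a : ℕ} (h : a ∈ l) : l.foldr Nat.gcd 0 ∣ a :=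
  Multiset.gcd_dvd (s := (l : Multiset ℕ)) (Multiset.mem_coe.mpr h)

/-- `RootedQuiddity w a b`: a triangulated polygon with a distinguished boundary edge, where
`a` and `b` count the triangles at the two ends of that edge and `w` those at the other
vertices in boundary order. `glue` puts a triangle on the root edge and the two pieces on
its other sides. -/
inductive RootedQuiddity : List ℤ → ℤ → ℤ → Prop
  | edge : RootedQuiddity [] 0 0
  | glue {u v : List ℤ} {a b c d : ℤ} :
      RootedQuiddity u a b → RootedQuiddity v c d →
      RootedQuiddity (u ++ (b + c + 1) :: v) (a + 1) (d + 1)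

namespace RootedQuiddity

theorem addEar_nil {a b : ℤ} (h : RootedQuiddity [] a b) :
    RootedQuiddity [1] (a + 1) (b + 1) := by
  generalize hw : ([] : List ℤ) = w at h
  cases h with
  | edge => exact glue edge edge
  | glue _ _ => simp at hw

theorem addEar_head {w : List ℤ} {a b x : ℤ} {l : List ℤ} (h : RootedQuiddity w a b)
    (hw : w = x :: l) : RootedQuiddity (1 :: (x + 1) :: l) (a + 1) b := by
  induction h generalizing x l with
  | edge => simp at hw
  | @glue u v a' b' c d hu hv ihu _ =>
    cases u with
    | nil =>
      simp only [List.nil_append, List.cons.injEq] at hw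
      obtain ⟨rfl, rfl⟩ := hw
      have := glue hu.addEar_nil hv
      rwa [show b' + 1 + c + 1 = b' + c + 1 + 1 by ring] at this
    | cons y u =>
      simp only [List.cons_append, List.cons.injEq] at hw
      obtain ⟨rfl, rfl⟩ := hw
      exact glue (ihu rfl) hv

theorem addEar_last {w : List ℤ} {a b x : ℤ} {l : List ℤ} (h : RootedQuiddity w a b)
    (hw : w = l ++ [x]) : RootedQuiddity (l ++ [x + 1, 1]) a (b + 1) := by
  induction h generalizing x l with
  | edge => simp at hw
  | @glue u v a' b' c d hu hv _ ihv =>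
    rcases List.eq_nil_or_concat v with rfl | ⟨v, y, rfl⟩
    · rw [List.append_singleton_inj] at hw
      obtain ⟨rfl, rfl⟩ := hw
      have := glue hu hv.addEar_nil
      rwa [show b' + (c + 1) + 1 = b' + c + 1 + 1 by ring] at this
    · rw [List.concat_eq_append] at hv ihv hw
      rw [← List.cons_append, ← List.append_assoc, List.append_singleton_inj] at hw
      obtain ⟨rfl, rfl⟩ := hw
      simpa using glue hu (ihv rfl)

theorem addEar_mid {w : List ℤ} {a b x y : ℤ} {l₁ l₂ : List ℤ} (h : RootedQuiddity w a b)
    (hw : w = l₁ ++ x :: y :: l₂) :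
    RootedQuiddity (l₁ ++ (x + 1) :: 1 :: (y + 1) :: l₂) a b := by
  induction h generalizing l₁ l₂ with
  | edge => simp at hw
  | @glue u v a' b' c d hu hv ihu ihv =>
    rcases List.append_eq_append_iff.mp hw.symm with
      ⟨_ | ⟨z, _ | ⟨t, k⟩⟩, rfl, hk⟩ | ⟨_ | ⟨z, k⟩, rfl, hk⟩
    · simp only [List.nil_append, List.cons.injEq] at hk
      obtain ⟨rfl, rfl⟩ := hk
      simpa only [List.append_nil, show b' + (c + 1) + 1 = b' + c + 1 + 1 by ring]
        using glue hu (hv.addEar_head rfl)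
    · simp only [List.cons_append, List.nil_append, List.cons.injEq] at hk
      obtain ⟨rfl, rfl, rfl⟩ := hk
      simpa only [List.append_assoc, List.cons_append, List.nil_append,
        show b' + 1 + c + 1 = b' + c + 1 + 1 by ring] using glue (hu.addEar_last rfl) hv
    · simp only [List.cons_append, List.cons.injEq] at hk
      obtain ⟨rfl, rfl, rfl⟩ := hk
      simpa only [List.append_assoc, List.cons_append] using glue (ihu rfl) hv
    · simp only [List.nil_append, List.cons.injEq] at hk
      obtain ⟨rfl, rfl, rfl⟩ := hk
      simpa only [List.append_nil, show b' + (c + 1) + 1 = b' + c + 1 + 1 by ring]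
        using glue hu (hv.addEar_head rfl)
    · simp only [List.cons_append, List.cons.injEq] at hk
      obtain ⟨rfl, rfl⟩ := hk
      simpa only [List.append_assoc, List.cons_append] using glue hu (ihv rfl)

theorem edge_or_triangle_of_emod_three_eq_one {w : List ℤ} {a b : ℤ}
    (h : RootedQuiddity w a b) (hw : ∀ x ∈ w, x % 3 = 1) :
    (w = [] ∧ a = 0 ∧ b = 0) ∨ (w = [1] ∧ a = 1 ∧ b = 1) := by
  induction h with
  | edge => exact Or.inl ⟨rfl, rfl, rfl⟩
  | @glue u v a b c d _ _ ihu ihv =>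
    simp only [List.mem_append, List.mem_cons] at hw
    have hapex : (b + c + 1) % 3 = 1 := hw _ (Or.inr (Or.inl rfl))
    rcases ihu fun x hx => hw x (Or.inl hx) with ⟨rfl, rfl, rfl⟩ | ⟨rfl, rfl, rfl⟩ <;>
      rcases ihv fun x hx => hw x (Or.inr (Or.inr hx)) with ⟨rfl, rfl, rfl⟩ | ⟨rfl, rfl, rfl⟩ <;>
      simp_all

end RootedQuiddity

namespace AdmSeq

/-- The root edge is `(0, k)`; the count at vertex `0` is the unrecorded `a`. -/
theorem exists_rootedQuiddity {m : List ℤ} (hm : AdmSeq m) :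
    ∃ w a b, RootedQuiddity w a b ∧ m.map (· - 2) = w ++ [b] := by
  induction hm with
  | base => exact ⟨[], 0, 0, .edge, rfl⟩
  | left x l _ ih =>
    obtain ⟨w, a, b, hq, hw⟩ := ih
    rcases w with _ | ⟨y, w⟩
    · simp only [List.map_cons, List.nil_append, List.cons.injEq, List.map_eq_nil_iff] at hw
      obtain ⟨rfl, rfl⟩ := hw
      exact ⟨[1], a + 1, x - 2 + 1, hq.addEar_nil, by simp; omega⟩
    · simp only [List.map_cons, List.cons_append, List.cons.injEq] at hw
      obtain ⟨rfl, hl⟩ := hw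
      exact ⟨_, _, _, hq.addEar_head rfl, by simp [hl]; omega⟩
  | right l x _ ih =>
    obtain ⟨w, a, b, hq, hw⟩ := ih
    rw [List.map_append, List.map_singleton, List.append_singleton_inj] at hw
    obtain ⟨hl, rfl⟩ := hw
    exact ⟨_, _, _, hq.glue .edge, by simp [hl]; omega⟩
  | mid l₁ x y l₂ _ ih =>
    obtain ⟨w, a, b, hq, hw⟩ := ih
    rcases List.eq_nil_or_concat l₂ with rfl | ⟨l₂, z, rfl⟩
    · rw [List.map_append, List.map_cons, List.map_cons, List.map_nil,
        List.append_cons, List.append_singleton_inj] at hw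
      obtain ⟨rfl, rfl⟩ := hw
      exact ⟨_, _, _, hq.addEar_last rfl, by simp; omega⟩
    · rw [List.concat_eq_append, List.map_append, ← List.cons_append, ← List.cons_append,
        List.map_append, List.map_singleton, ← List.append_assoc,
        List.append_singleton_inj, List.map_cons, List.map_cons] at hw
      obtain ⟨rfl, rfl⟩ := hw
      exact ⟨_, _, _, hq.addEar_mid rfl, by simp; omega⟩

theorem three_mem {m : List ℤ} (hm : AdmSeq m) (hm2 : m ≠ [2]) : 3 ∈ m := by
  cases hm <;> simp_all

theorem length_le_two_of_forall_three_dvd {m : List ℤ} (hm : AdmSeq m)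
    (h3 : ∀ x ∈ m, 3 ∣ x) : m.length ≤ 2 := by
  obtain ⟨w, a, b, hq, hw⟩ := hm.exists_rootedQuiddity
  have hmod : ∀ x ∈ w ++ [b], x % 3 = 1 := by
    rw [← hw]
    intro x hx
    obtain ⟨y, hy, rfl⟩ := List.mem_map.mp hx
    have := h3 y hy
    omega
  rw [← List.length_map (f := (· - 2)), hw]
  rcases hq.edge_or_triangle_of_emod_three_eq_one fun x hx => hmod x (by simp [hx]) with
    ⟨rfl, -, -⟩ | ⟨rfl, -, -⟩ <;> simp

end AdmSeq

/-- the entries of an admissible distance sequence of length at least 3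
are coprime. -/
theorem admSeq_gcd_eq_one (m : List ℤ) (hm : AdmSeq m) (h3 : 3 ≤ m.length) :
    (m.map Int.natAbs).foldr Nat.gcd 0 = 1 := by
  have hg : ∀ x ∈ m, (m.map Int.natAbs).foldr Nat.gcd 0 ∣ x.natAbs := fun x hx =>
    List.foldr_gcd_dvd (List.mem_map_of_mem hx)
  have h3mem : (3 : ℤ) ∈ m := hm.three_mem (by rintro rfl; simp at h3)
  obtain ⟨x, hx, hx3⟩ : ∃ x ∈ m, ¬ (3 : ℤ) ∣ x := by
    by_contra! h
    exact absurd (hm.length_le_two_of_forall_three_dvd h) (by omega)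
  rcases (Nat.dvd_prime Nat.prime_three).mp (hg 3 h3mem) with h | h
  · exact h
  · have h3x := hg x hx
    rw [h] at h3x
    exact absurd (Int.natAbs_dvd_natAbs.mp h3x) hx3
end

section
/- Fix s ≥ 1 and let k = 2s. On ℤ^k with coordinates x_1, …, x_k, define the linear functional ψ(x) = 3(x_1 + … + x_s) + (x_{s+1} + … + x_{k−1}) − 2x_k, and the ℚ-valued symmetric bilinear form B(x, y) = Σ_{i=1}^{k−1} x_i y_i + (1/4)·ψ(x)·ψ(y). Then B takes integer values on the subgroup M = {x ∈ ℤ^k : ψ(x) ≡ 0 (mod 4)}, and (M, B) is isometric to the orthogonal direct sum D_{2s−1} ⊕ ⟨4⟩; that is, there is a group isomorphism from M onto D_{2s−1} × ℤ carrying B to the form ((u, a), (v, b)) ↦ u·v + 4ab. -/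
/-- The linear functional `ψ(x) = 3(x_1 + … + x_s) + (x_{s+1} + … + x_{k-1}) - 2 x_k`
on `ℤ^k`, `k = 2s`. -/
def psiHom (s : ℕ) : (Fin (2 * s) → ℤ) →+ ℤ :=
  AddMonoidHom.mk'
    (fun x => ∑ i : Fin (2 * s),
      (if (i : ℕ) < s then 3 else if (i : ℕ) < 2 * s - 1 then 1 else -2) * x i)
    (by intro a b; simp [mul_add, Finset.sum_add_distrib])

/-- The ℚ-valued symmetric bilinear form
`B(x, y) = ∑_{i=1}^{k-1} xᵢ yᵢ + (1/4) ψ(x) ψ(y)` on `ℤ^k`, `k = 2s`. -/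
def Bform (s : ℕ) (x y : Fin (2 * s) → ℤ) : ℚ :=
  (∑ i : Fin (2 * s), if (i : ℕ) < 2 * s - 1 then (x i : ℚ) * (y i : ℚ) else 0) +
    (1 / 4 : ℚ) * (psiHom s x : ℚ) * (psiHom s y : ℚ)

/-- The subgroup `M = {x ∈ ℤ^k : ψ(x) ≡ 0 (mod 4)}`. -/
def Msub (s : ℕ) : AddSubgroup (Fin (2 * s) → ℤ) where
  carrier := {x | (4 : ℤ) ∣ psiHom s x}
  zero_mem' := by simp
  add_mem' := by
    intro a b ha hb
    simpa [map_add] using dvd_add ha hb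
  neg_mem' := by
    intro a ha
    simpa [map_neg] using ha.neg_right

/-- The lattice `D_n = {x ∈ ℤ^n : x_1 + … + x_n is even}`. -/
def Dlat (n : ℕ) : AddSubgroup (Fin n → ℤ) where
  carrier := {x | Even (∑ i, x i)}
  zero_mem' := by simp
  add_mem' := by
    intro a b ha hb
    simpa [Finset.sum_add_distrib] using ha.add hb
  neg_mem' := by
    intro a ha
    simpa using ha.neg

section Aux
variable {M : Type*} [AddCommMonoid M]

lemma sum_split' {s : ℕ} (hs : 1 ≤ s) (f : Fin (2*s) → M) :
    ∑ i, f i = (∑ i : Fin (2*s-1), f (Fin.castLE (by omega) i)) + f ⟨2*s-1, by omega⟩ := by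
  have h : 2*s-1+1 = 2*s := by omega
  rw [← Fintype.sum_equiv (finCongr h) (fun j => f (finCongr h j)) f (fun j => rfl),
      Fin.sum_univ_castSucc]
  rfl

end Aux

def Cfun (s : ℕ) (u : Fin (2*s-1) → ℤ) : ℤ :=
  ∑ i : Fin (2*s-1), (if (i:ℕ) < s then 3 else 1) * u i

lemma psi_split {s : ℕ} (hs : 1 ≤ s) (x : Fin (2*s) → ℤ) :
    psiHom s x = Cfun s (fun i => x (Fin.castLE (by omega) i)) + (-2) * x ⟨2*s-1, by omega⟩ := by
  show (∑ i : Fin (2*s), (if (i:ℕ) < s then 3 else if (i:ℕ) < 2*s-1 then 1 else -2) * x i) = _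
  rw [sum_split' hs (f := fun i => (if (i:ℕ) < s then 3 else if (i:ℕ) < 2*s-1 then 1 else -2) * x i)]
  unfold Cfun
  congr 1
  · apply Finset.sum_congr rfl
    intro i _
    have hi : ((Fin.castLE (by omega : 2*s-1 ≤ 2*s) i : Fin (2*s)) : ℕ) = (i:ℕ) := rfl
    rcases lt_or_ge (i:ℕ) s with h | h
    · simp [hi, h]
    · have hlt : (i:ℕ) < 2*s-1 := i.isLt
      simp [hi, Nat.not_lt.mpr h, hlt]
  · have h1 : ¬ (2*s-1 < s) := by omega
    simp [h1]

lemma even_C {s : ℕ} (u : Fin (2*s-1) → ℤ) : Even (Cfun s u) ↔ Even (∑ i, u i) := by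
  have key : Even (Cfun s u - ∑ i, u i) := by
    unfold Cfun
    rw [← Finset.sum_sub_distrib]
    apply Finset.even_sum
    intro i _
    rcases lt_or_ge (i:ℕ) s with h | h
    · simp only [if_pos h]
      exact ⟨u i, by ring⟩
    · simp [if_neg (Nat.not_lt.mpr h)]
  exact Int.even_sub.mp key

/-- first coordinates of an element of `Msub` land in `Dlat`. -/
lemma first_mem_D {s : ℕ} (hs : 1 ≤ s) (x : Msub s) :
    (fun i : Fin (2*s-1) => x.val (Fin.castLE (by omega) i)) ∈ Dlat (2*s-1) := by
  have h4 : (4:ℤ) ∣ psiHom s x.val := x.2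
  have heven : Even (psiHom s x.val) := by
    obtain ⟨m, hm⟩ := h4; exact ⟨2*m, by omega⟩
  rw [psi_split hs] at heven
  have h2 : Even ((-2) * x.val ⟨2*s-1, by omega⟩) := ⟨-x.val ⟨2*s-1, by omega⟩, by ring⟩
  have hC : Even (Cfun s (fun i => x.val (Fin.castLE (by omega) i))) := by
    have := (Int.even_add.mp heven)
    exact this.mpr h2
  exact (even_C _).mp hC

/-- the forward hom. -/
def Fhom (s : ℕ) (hs : 1 ≤ s) : Msub s →+ (Dlat (2*s-1) × ℤ) :=
  AddMonoidHom.mk'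
    (fun x => (⟨fun i => x.val (Fin.castLE (by omega) i), first_mem_D hs x⟩,
      psiHom s x.val / 4))
    (by
      intro a b
      obtain ⟨m, hm⟩ := a.2
      obtain ⟨k, hk⟩ := b.2
      refine Prod.ext (Subtype.ext ?_) ?_
      · rfl
      · show psiHom s (a.val + b.val) / 4 = psiHom s a.val / 4 + psiHom s b.val / 4
        rw [map_add, hm, hk, ← mul_add, Int.mul_ediv_cancel_left _ (show (4:ℤ) ≠ 0 by norm_num),
          Int.mul_ediv_cancel_left _ (show (4:ℤ) ≠ 0 by norm_num),
          Int.mul_ediv_cancel_left _ (show (4:ℤ) ≠ 0 by norm_num)])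

lemma Fhom_bij (s : ℕ) (hs : 1 ≤ s) : Function.Bijective (Fhom s hs) := by
  constructor
  · intro x y hxy
    have h1 : ∀ i : Fin (2*s-1), x.val (Fin.castLE (by omega) i) = y.val (Fin.castLE (by omega) i) :=
      fun i => congrFun (congrArg Subtype.val (congrArg Prod.fst hxy)) i
    have hψd : psiHom s x.val / 4 = psiHom s y.val / 4 := congrArg Prod.snd hxy
    obtain ⟨m, hm⟩ := x.2
    obtain ⟨k, hk⟩ := y.2
    have hψ : psiHom s x.val = psiHom s y.val := by
      rw [hm, hk] at hψd ⊢
      rw [Int.mul_ediv_cancel_left _ (by norm_num), Int.mul_ediv_cancel_left _ (by norm_num)] at hψd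
      rw [hψd]
    have hC : Cfun s (fun i => x.val (Fin.castLE (by omega) i))
        = Cfun s (fun i => y.val (Fin.castLE (by omega) i)) := by
      exact congrArg (Cfun s) (funext h1)
    rw [psi_split hs, psi_split hs, hC] at hψ
    have hlast : x.val ⟨2*s-1, by omega⟩ = y.val ⟨2*s-1, by omega⟩ := by omega
    apply Subtype.ext
    funext j
    by_cases hj : (j:ℕ) < 2*s-1
    · have := h1 ⟨j, hj⟩
      have hje : (Fin.castLE (by omega : 2*s-1 ≤ 2*s) ⟨(j:ℕ), hj⟩ : Fin (2*s)) = j := Fin.ext rfl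
      rwa [hje] at this
    · have hje : j = ⟨2*s-1, by omega⟩ := Fin.ext (show (j:ℕ) = 2*s-1 by omega)
      rw [hje]; exact hlast
  · rintro ⟨u, a⟩
    set L : ℤ := Cfun s u.val / 2 - 2 * a with hL
    have hCe : Even (Cfun s u.val) := (even_C u.val).mpr u.2
    have h2d : (2:ℤ) ∣ Cfun s u.val := hCe.two_dvd
    set x : Fin (2*s) → ℤ := fun j => if h : (j:ℕ) < 2*s-1 then u.val ⟨j, h⟩ else L with hx
    have hfirst : (fun i : Fin (2*s-1) => x (Fin.castLE (by omega) i)) = u.val := by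
      funext i
      have : ((Fin.castLE (by omega : 2*s-1 ≤ 2*s) i : Fin (2*s)) : ℕ) < 2*s-1 := i.isLt
      simp only [hx, dif_pos this]
      exact congrArg _ (Fin.ext rfl)
    have hlast : x ⟨2*s-1, by omega⟩ = L := by
      simp only [hx, dif_neg (lt_irrefl (2*s-1))]
    have hψ : psiHom s x = 4 * a := by
      rw [psi_split hs, hfirst, hlast, hL]
      have := Int.ediv_mul_cancel h2d
      have h2 : 2 * (Cfun s u.val / 2) = Cfun s u.val := by
        rw [mul_comm]; exact Int.ediv_mul_cancel h2d
      ring_nf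
      omega
    have hxM : x ∈ Msub s := ⟨a, hψ⟩
    refine ⟨⟨x, hxM⟩, ?_⟩
    refine Prod.ext (Subtype.ext ?_) ?_
    · exact hfirst
    · show psiHom s x / 4 = a
      rw [hψ, Int.mul_ediv_cancel_left _ (by norm_num)]

/-- the form `B` is integral on `M = {x : ψ(x) ≡ 0 (mod 4)}`, and `(M, B)`
is isometric to the orthogonal direct sum `D_{2s-1} ⊕ ⟨4⟩`. -/
theorem M_isometric_D_oplus_4 (s : ℕ) (hs : 1 ≤ s) :
    (∀ x y : Msub s, ∃ n : ℤ, Bform s x.val y.val = n) ∧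
    ∃ e : Msub s ≃+ (Dlat (2 * s - 1) × ℤ),
      ∀ x y : Msub s,
        Bform s x.val y.val =
          ((∑ i : Fin (2 * s - 1), (e x).1.val i * (e y).1.val i) +
            4 * (e x).2 * (e y).2 : ℤ) := by
  have key : ∀ x y : Msub s,
      Bform s x.val y.val =
        ((∑ i : Fin (2*s-1), x.val (Fin.castLE (by omega) i) * y.val (Fin.castLE (by omega) i)) +
          4 * (psiHom s x.val / 4) * (psiHom s y.val / 4) : ℤ) := by
    intro x y
    obtain ⟨m, hm⟩ := x.2
    obtain ⟨k, hk⟩ := y.2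
    have hsum : (∑ i : Fin (2*s), if (i:ℕ) < 2*s-1 then (x.val i : ℚ) * (y.val i : ℚ) else 0)
        = ((∑ i : Fin (2*s-1), x.val (Fin.castLE (by omega) i) * y.val (Fin.castLE (by omega) i) : ℤ) : ℚ) := by
      rw [sum_split' hs (f := fun i => if (i:ℕ) < 2*s-1 then (x.val i : ℚ) * (y.val i : ℚ) else 0)]
      push_cast
      rw [if_neg (lt_irrefl (2*s-1)), add_zero]
      apply Finset.sum_congr rfl
      intro i _
      rw [if_pos (show ((Fin.castLE (by omega : 2*s-1 ≤ 2*s) i : Fin (2*s)) : ℕ) < 2*s-1 from i.isLt)]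
    unfold Bform
    rw [hsum, hm, hk]
    push_cast [Int.mul_ediv_cancel_left _ (show (4:ℤ) ≠ 0 by norm_num)]
    ring
  constructor
  · intro x y
    exact ⟨_, key x y⟩
  · refine ⟨AddEquiv.ofBijective (Fhom s hs) (Fhom_bij s hs), ?_⟩
    intro x y
    exact key x y
end

section
/- Fix s ≥ 1 and let L = {x ∈ ℤ^{2s−1} : 3(x_1 + … + x_s) + x_{s+1} + … + x_{2s−1} = 0}, with the standard Euclidean form of ℤ^{2s−1}. The vectors of square 2 in L are exactly the vectors e_i − e_j with i ≠ j and either i, j ∈ {1, …, s} or i, j ∈ {s+1, …, 2s−1} (where e_1, …, e_{2s−1} is the standard basis); in particular, they form a root system of type A_{s−1} ⊕ A_{s−2}. -/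
/-- in the lattice
`L = {x ∈ ℤ^{2s-1} : 3(x_1 + … + x_s) + x_{s+1} + … + x_{2s-1} = 0}`,
the vectors of square 2 are exactly the vectors `e_i - e_j` with `i ≠ j` and
either both `i, j` among the first `s` coordinates or both among the last `s - 1`
coordinates (a root system of type `A_{s-1} ⊕ A_{s-2}`). -/
theorem roots_of_L (s : ℕ) (hs : 1 ≤ s) (x : Fin (2 * s - 1) → ℤ) :
    ((∑ i : Fin (2 * s - 1), (if (i : ℕ) < s then 3 else 1) * x i) = 0 ∧
        (∑ i : Fin (2 * s - 1), x i * x i) = 2) ↔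
      ∃ i j : Fin (2 * s - 1), i ≠ j ∧
        (((i : ℕ) < s ∧ (j : ℕ) < s) ∨ (s ≤ (i : ℕ) ∧ s ≤ (j : ℕ))) ∧
        x = fun t => (if t = i then 1 else 0) - (if t = j then 1 else 0) := by
  constructor
  · rintro ⟨h1, h2⟩
    set S : Finset (Fin (2 * s - 1)) := Finset.univ.filter (fun i => x i ≠ 0) with hSdef
    have hmem : ∀ t, t ∈ S ↔ x t ≠ 0 := by intro t; simp [hSdef]
    have hS2 : ∑ t ∈ S, x t * x t = 2 := by
      rw [← h2]
      apply Finset.sum_subset (Finset.subset_univ S)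
      intro t _ ht
      have hxt : x t = 0 := by
        by_contra h
        exact ht ((hmem t).2 h)
      simp [hxt]
    have hone : ∀ t ∈ S, 1 ≤ x t * x t := by
      intro t ht
      have hx := (hmem t).1 ht
      have h1 := Int.one_le_abs hx
      nlinarith [abs_mul_abs_self (x t)]
    have hcard2 : S.card = 2 := by
      have h2' := Finset.card_nsmul_le_sum S (fun t => x t * x t) 1 hone
      rw [hS2] at h2'
      simp only [nsmul_eq_mul, mul_one] at h2'
      have hle : S.card ≤ 2 := by exact_mod_cast h2'
      have hge : 2 ≤ S.card := by
        by_contra h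
        push_neg at h
        have : S.card = 0 ∨ S.card = 1 := by omega
        rcases this with hc | hc
        · rw [Finset.card_eq_zero.mp hc] at hS2
          simp at hS2
        · obtain ⟨a, ha⟩ := Finset.card_eq_one.mp hc
          rw [ha, Finset.sum_singleton] at hS2
          have hxa : x a ≠ 0 := (hmem a).1 (ha ▸ Finset.mem_singleton_self a)
          have habs : 1 ≤ |x a| := Int.one_le_abs hxa
          have habs2 : |x a| = 1 ∨ 2 ≤ |x a| := by omega
          rcases habs2 with h' | h' <;>
            nlinarith [abs_mul_abs_self (x a)]
      omega
    obtain ⟨i, j, hij, hSij⟩ := Finset.card_eq_two.mp hcard2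
    have hiS : i ∈ S := by rw [hSij]; simp
    have hjS : j ∈ S := by rw [hSij]; simp
    have hzero : ∀ t, t ≠ i → t ≠ j → x t = 0 := by
      intro t hti htj
      by_contra h
      have := (hmem t).2 h
      rw [hSij] at this
      simp at this
      tauto
    have hsum2 : x i * x i + x j * x j = 2 := by
      rw [hSij, Finset.sum_pair hij] at hS2
      exact hS2
    have h1i := hone i hiS
    have h1j := hone j hjS
    have hii : x i * x i = 1 := by omega
    have hjj : x j * x j = 1 := by omega
    have hi1 := mul_self_eq_one_iff.mp hii
    have hj1 := mul_self_eq_one_iff.mp hjj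
    have hw : (if (i : ℕ) < s then (3 : ℤ) else 1) * x i
        + (if (j : ℕ) < s then (3 : ℤ) else 1) * x j = 0 := by
      rw [← h1]
      have hsub : ∑ t ∈ ({i, j} : Finset (Fin (2 * s - 1))),
          (if (t : ℕ) < s then (3 : ℤ) else 1) * x t
          = ∑ t : Fin (2 * s - 1), (if (t : ℕ) < s then (3 : ℤ) else 1) * x t := by
        apply Finset.sum_subset (Finset.subset_univ _)
        intro t _ ht
        simp only [Finset.mem_insert, Finset.mem_singleton] at ht
        push_neg at ht
        rw [hzero t ht.1 ht.2, mul_zero]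
      rw [← hsub, Finset.sum_pair hij]
    rcases hi1 with hi1 | hi1
    · have hxj1 : x j = -1 := by
        rcases hj1 with h | h
        · exfalso
          rw [hi1, h] at hw
          split_ifs at hw <;> omega
        · exact h
      refine ⟨i, j, hij, ?_, ?_⟩
      · by_cases hi' : (i : ℕ) < s <;> by_cases hj' : (j : ℕ) < s
        · exact Or.inl ⟨hi', hj'⟩
        · exfalso; rw [hi1, hxj1, if_pos hi', if_neg hj'] at hw; omega
        · exfalso; rw [hi1, hxj1, if_neg hi', if_pos hj'] at hw; omega
        · exact Or.inr ⟨Nat.le_of_not_lt hi', Nat.le_of_not_lt hj'⟩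
      · funext t
        by_cases ht : t = i
        · simp [ht, hi1, hij]
        · by_cases ht2 : t = j
          · simp [ht2, hxj1, Ne.symm hij]
          · simp [ht, ht2, hzero t ht ht2]
    · have hxj1 : x j = 1 := by
        rcases hj1 with h | h
        · exact h
        · exfalso
          rw [hi1, h] at hw
          split_ifs at hw <;> omega
      refine ⟨j, i, Ne.symm hij, ?_, ?_⟩
      · by_cases hi' : (i : ℕ) < s <;> by_cases hj' : (j : ℕ) < s
        · exact Or.inl ⟨hj', hi'⟩
        · exfalso; rw [hi1, hxj1, if_pos hi', if_neg hj'] at hw; omega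
        · exfalso; rw [hi1, hxj1, if_neg hi', if_pos hj'] at hw; omega
        · exact Or.inr ⟨Nat.le_of_not_lt hj', Nat.le_of_not_lt hi'⟩
      · funext t
        by_cases ht : t = j
        · simp [ht, hxj1, Ne.symm hij]
        · by_cases ht2 : t = i
          · simp [ht2, hi1, hij]
          · simp [ht, ht2, hzero t ht2 ht]
  · rintro ⟨i, j, hij, hside, rfl⟩
    constructor
    · simp only [mul_sub, mul_ite, mul_one, mul_zero, Finset.sum_sub_distrib,
        Finset.sum_ite_eq', Finset.mem_univ, if_true]
      rcases hside with ⟨hi', hj'⟩ | ⟨hi', hj'⟩ <;> split_ifs <;> omega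
    · have key : ∀ t : Fin (2 * s - 1),
          ((if t = i then (1 : ℤ) else 0) - (if t = j then 1 else 0))
          * ((if t = i then 1 else 0) - (if t = j then 1 else 0))
          = (if t = i then 1 else 0) + (if t = j then 1 else 0) := by
        intro t
        by_cases h1 : t = i <;> by_cases h2 : t = j
        · exact absurd (h1.symm.trans h2) hij
        · simp [h1, h2, hij]
        · simp [h1, h2, Ne.symm hij]
        · simp [h1, h2]
      rw [Finset.sum_congr rfl (fun t _ => key t), Finset.sum_add_distrib]
      simp [Finset.sum_ite_eq']
end

section
/- Let F be the free group on generators x_1, x_2, x_3, and let σ_1 and σ_2 be the automorphisms of F determined by σ_1 : x_1 ↦ x_1 x_2 x_1^{−1}, x_2 ↦ x_1, x_3 ↦ x_3, and σ_2 : x_1 ↦ x_1, x_2 ↦ x_2 x_3 x_2^{−1}, x_3 ↦ x_2. Let n_1, …, n_k (k ≥ 2) be integers whose pairwise differences n_i − n_j have greatest common divisor 1. Let N be the normal closure in F of the set of elements ((σ_1^{n_i} ∘ σ_2 ∘ σ_1^{−n_i})(x_j))·x_j^{−1} for 1 ≤ i ≤ k and 1 ≤ j ≤ 3. Then in the quotient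 group G = F/N the images of x_1, x_2 and x_3 coincide; in particular, G is cyclic. -/
open FreeGroup

/-- The free group on three generators `x₁, x₂, x₃`. -/
abbrev F3 := FreeGroup (Fin 3)

def x1 : F3 := of 0
def x2 : F3 := of 1
def x3 : F3 := of 2

/-- The Artin generator `σ₁` as an endomorphism of `F3`:
`x₁ ↦ x₁x₂x₁⁻¹, x₂ ↦ x₁, x₃ ↦ x₃`. -/
def s1f : F3 →* F3 := lift ![x1 * x2 * x1⁻¹, x1, x3]

/-- The inverse of `σ₁`: `x₁ ↦ x₂, x₂ ↦ x₂⁻¹x₁x₂, x₃ ↦ x₃`. -/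
def s1inv : F3 →* F3 := lift ![x2, x2⁻¹ * x1 * x2, x3]

/-- The Artin generator `σ₂` as an endomorphism of `F3`:
`x₁ ↦ x₁, x₂ ↦ x₂x₃x₂⁻¹, x₃ ↦ x₂`. -/
def s2f : F3 →* F3 := lift ![x1, x2 * x3 * x2⁻¹, x2]

/-- The inverse of `σ₂`: `x₁ ↦ x₁, x₂ ↦ x₃, x₃ ↦ x₃⁻¹x₂x₃`. -/
def s2inv : F3 →* F3 := lift ![x1, x3, x3⁻¹ * x2 * x3]

/-- `σ₁` as an automorphism of `F3`. -/
def sigma1 : MulAut F3 :=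
  MonoidHom.toMulEquiv s1f s1inv
    (by
      ext i
      fin_cases i <;>
        simp [s1f, s1inv, x1, x2, x3] <;> group)
    (by
      ext i
      fin_cases i <;>
        simp [s1f, s1inv, x1, x2, x3] <;> group)

/-- `σ₂` as an automorphism of `F3`. -/
def sigma2 : MulAut F3 :=
  MonoidHom.toMulEquiv s2f s2inv
    (by
      ext i
      fin_cases i <;>
        simp [s2f, s2inv, x1, x2, x3] <;> group)
    (by
      ext i
      fin_cases i <;>
        simp [s2f, s2inv, x1, x2, x3] <;> group)

/-- The braid relations: each `mᵢ = σ₁^{nᵢ} σ₂ σ₁^{-nᵢ}` acts trivially on each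
generator. -/
def rels (k : ℕ) (n : Fin k → ℤ) : Set F3 :=
  {g | ∃ (i : Fin k) (j : Fin 3),
    g = ((sigma1 ^ (n i)) * sigma2 * (sigma1 ^ (-(n i)))) (of j) * (of j)⁻¹}

/-!
Write `yₘ = σ₁ᵐ(x₂)`. The relation `mᵢ(x₃) = x₃` says `y_{nᵢ} = x₃`, because `σ₁` fixes `x₃` and
`σ₂(x₃) = x₂`. Since `σ₁` fixes `c = x₁x₂` and `σ₁(x₂) = x₁ = c x₂⁻¹`, the sequence obeys
`y_{m+1} = c y_m⁻¹`, so in any quotient one coincidence `y_a = y_b` makes `a - b` a period of the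
whole sequence. The periods form a subgroup of `ℤ` containing all `nᵢ - nⱼ`, hence `1`; so the
sequence is constant in `G`, giving `x₁ = y₁ = y₀ = x₂` and `x₃ = y_{nᵢ} = y₀ = x₂`.
-/

theorem MulAut.zpow_apply_eq_self {G : Type*} [Group G] {σ : MulAut G} {g : G} (h : σ g = g)
    (m : ℤ) : (σ ^ m) g = g :=
  (MulAction.stabilizer (MulAut G) g).zpow_mem h m

def Function.periodAddSubgroup {α β : Type*} [AddGroup α] (f : α → β) : AddSubgroup α where
  carrier := {p | Function.Periodic f p}
  zero_mem' x := congrArg f (add_zero x)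
  add_mem' := Function.Periodic.add_period
  neg_mem' := Function.Periodic.neg

theorem Int.one_mem_of_forall_sub_mem {ι : Type*} {S : AddSubgroup ℤ} (n : ι → ℤ)
    (hgcd : ∀ d : ℤ, (∀ i j, d ∣ n i - n j) → IsUnit d) (hS : ∀ i j, n i - n j ∈ S) :
    (1 : ℤ) ∈ S := by
  obtain ⟨a, rfl⟩ := Int.subgroup_cyclic S
  rw [← AddSubgroup.zmultiples_eq_closure] at hS ⊢
  have ha : IsUnit a := hgcd a fun i j => Int.mem_zmultiples_iff.mp (hS i j)
  exact Int.mem_zmultiples_iff.mpr ha.dvd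

section InvRecurrence

variable {G : Type*} [Group G] {c : G} {f : ℤ → G}

theorem periodic_sub_of_apply_eq (hf : ∀ m, f (m + 1) = c * (f m)⁻¹) {a b : ℤ}
    (hab : f a = f b) : Function.Periodic f (a - b) := by
  have hprev (m : ℤ) : f m = (f (m + 1))⁻¹ * c := by rw [hf]; group
  intro m
  induction m using Int.inductionOn' (b := b) with
  | zero => rw [add_sub_cancel, hab]
  | succ m _ ih => rw [add_right_comm, hf, ih, hf]
  | pred m _ ih =>
    rw [hprev, hprev (m - 1), show m - 1 + (a - b) + 1 = m + (a - b) by ring, sub_add_cancel, ih]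

theorem apply_eq_apply_zero_of_apply_eq (hf : ∀ m, f (m + 1) = c * (f m)⁻¹) {ι : Type*}
    (n : ι → ℤ) (hgcd : ∀ d : ℤ, (∀ i j, d ∣ n i - n j) → IsUnit d)
    (hn : ∀ i j, f (n i) = f (n j)) (m : ℤ) : f m = f 0 := by
  have h1 : (1 : ℤ) ∈ Function.periodAddSubgroup f :=
    Int.one_mem_of_forall_sub_mem n hgcd fun i j => periodic_sub_of_apply_eq hf (hn i j)
  simpa using Function.Periodic.int_mul_eq h1 m

end InvRecurrence

theorem FreeGroup.isCyclic_of_surjective {α G : Type*} [Group G] (φ : FreeGroup α →* G)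
    (hφ : Function.Surjective φ) (g : G) (h : ∀ a, φ (of a) = g) : IsCyclic G := by
  have hrange : φ.range ≤ Subgroup.zpowers g := by
    rw [MonoidHom.range_eq_map, ← FreeGroup.closure_range_of, MonoidHom.map_closure,
      Subgroup.closure_le]
    rintro _ ⟨_, ⟨a, rfl⟩, rfl⟩
    exact h a ▸ Subgroup.mem_zpowers g
  exact ⟨g, fun x => hrange (hφ x)⟩

lemma sigma1_x1 : sigma1 x1 = x1 * x2 * x1⁻¹ := rfl

lemma sigma1_x2 : sigma1 x2 = x1 := rfl

lemma sigma1_x3 : sigma1 x3 = x3 := rfl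

lemma sigma2_x3 : sigma2 x3 = x2 := rfl

lemma sigma1_x1_mul_x2 : sigma1 (x1 * x2) = x1 * x2 := by
  rw [_root_.map_mul, sigma1_x1, sigma1_x2, inv_mul_cancel_right]

def braidOrbit (m : ℤ) : F3 := (sigma1 ^ m) x2

lemma braidOrbit_add_one (m : ℤ) : braidOrbit (m + 1) = x1 * x2 * (braidOrbit m)⁻¹ := by
  rw [braidOrbit, braidOrbit, zpow_add_one, MulAut.mul_apply, sigma1_x2,
    ← MulAut.zpow_apply_eq_self sigma1_x1_mul_x2 m, ← _root_.map_inv, ← _root_.map_mul,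
    mul_inv_cancel_right]

lemma braidOrbit_mul_x3_inv_mem_rels {k : ℕ} (n : Fin k → ℤ) (i : Fin k) :
    braidOrbit (n i) * x3⁻¹ ∈ rels k n :=
  ⟨i, 2, by
    rw [MulAut.mul_apply, MulAut.mul_apply, show (of 2 : F3) = x3 from rfl,
      MulAut.zpow_apply_eq_self sigma1_x3, sigma2_x3]
    rfl⟩

theorem quotient_by_braid_relations_cyclic_general (k : ℕ) (n : Fin k → ℤ)
    (hgcd : ∀ d : ℤ, (∀ i j : Fin k, d ∣ (n i - n j)) → IsUnit d) :
    ((x1 : F3 ⧸ Subgroup.normalClosure (rels k n)) =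
        (x2 : F3 ⧸ Subgroup.normalClosure (rels k n)) ∧
      (x2 : F3 ⧸ Subgroup.normalClosure (rels k n)) =
        (x3 : F3 ⧸ Subgroup.normalClosure (rels k n))) ∧
    IsCyclic (F3 ⧸ Subgroup.normalClosure (rels k n)) := by
  set N := Subgroup.normalClosure (rels k n)
  let f : ℤ → F3 ⧸ N := QuotientGroup.mk' N ∘ braidOrbit
  have hf (m : ℤ) : f (m + 1) = QuotientGroup.mk' N (x1 * x2) * (f m)⁻¹ := by
    simp only [f, Function.comp_apply, braidOrbit_add_one, _root_.map_mul, _root_.map_inv]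
  have hx3 (i : Fin k) : f (n i) = x3 := by
    rw [← mul_inv_eq_one]
    exact (QuotientGroup.eq_one_iff _).mpr
      (Subgroup.subset_normalClosure (braidOrbit_mul_x3_inv_mem_rels n i))
  have hconst := apply_eq_apply_zero_of_apply_eq hf n hgcd fun i j => (hx3 i).trans (hx3 j).symm
  obtain ⟨i⟩ : Nonempty (Fin k) := by
    by_contra hk
    exact not_isUnit_zero (hgcd 0 fun i => (hk ⟨i⟩).elim)
  have h12 : (x1 : F3 ⧸ N) = x2 := hconst 1
  have h23 : (x2 : F3 ⧸ N) = x3 := (hconst (n i)).symm.trans (hx3 i)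
  refine ⟨⟨h12, h23⟩, FreeGroup.isCyclic_of_surjective (QuotientGroup.mk' N)
    (QuotientGroup.mk'_surjective N) x2 fun a => ?_⟩
  fin_cases a
  exacts [h12, rfl, h23.symm]

/-- if the pairwise differences of the `nᵢ` (`k ≥ 2`) have gcd 1, then
in the quotient of `F3` by the normal closure of the braid relations the images of the
three generators coincide; in particular, the quotient is cyclic. -/
theorem quotient_by_braid_relations_cyclic (k : ℕ) (hk : 2 ≤ k) (n : Fin k → ℤ)
    (hgcd : ∀ d : ℤ, (∀ i j : Fin k, d ∣ (n i - n j)) → IsUnit d) :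
    ((x1 : F3 ⧸ Subgroup.normalClosure (rels k n)) =
        (x2 : F3 ⧸ Subgroup.normalClosure (rels k n)) ∧
      (x2 : F3 ⧸ Subgroup.normalClosure (rels k n)) =
        (x3 : F3 ⧸ Subgroup.normalClosure (rels k n))) ∧
    IsCyclic (F3 ⧸ Subgroup.normalClosure (rels k n)) :=
  quotient_by_braid_relations_cyclic_general k n hgcd
end

section
/- For every connected oriented skeleton Γ = (E, op, nx, P), the group H_Γ is a free abelian group of rank |E|/3; equivalently, the defining linear conditions — one ℤ²-valued condition per vertex (taking one representative α of each nx-orbit in condition (i)) and one ℤ²-valued condition per edge — are linearly independent over ℚ. -/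
/-- The matrix `X = [[-1, 1], [-1, 0]] ∈ SL(2, ℤ)` acting on column vectors `ℤ²`. -/
def Xact : ℤ × ℤ →+ ℤ × ℤ :=
  AddMonoidHom.mk' (fun v => (-v.1 + v.2, -v.1))
    (by
      intro a b
      simp only [Prod.fst_add, Prod.snd_add, Prod.mk_add_mk, Prod.mk.injEq]
      constructor <;> ring)

/-- The matrix `Y = [[0, -1], [1, 0]] ∈ SL(2, ℤ)` acting on column vectors `ℤ²`. -/
def Yact : ℤ × ℤ →+ ℤ × ℤ :=
  AddMonoidHom.mk' (fun v => (-v.2, v.1))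
    (by
      intro a b
      simp only [Prod.fst_add, Prod.snd_add, Prod.mk_add_mk, Prod.mk.injEq]
      constructor <;> first | ring | trivial)

variable {E : Type*}

/-- The vertex condition at `α`: `h(α) + X·h(nx α) + X²·h(nx² α)`. -/
def condV (nx : Equiv.Perm E) (α : E) : (E → ℤ × ℤ) →+ ℤ × ℤ :=
  AddMonoidHom.mk' (fun h => h α + Xact (h (nx α)) + Xact (Xact (h (nx (nx α)))))
    (by intro a b; simp only [Pi.add_apply, map_add]; abel)

/-- The edge condition at a head `α`: `h(α) + Y·h(op α)`. -/
def condE (op : Equiv.Perm E) (α : E) : (E → ℤ × ℤ) →+ ℤ × ℤ :=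
  AddMonoidHom.mk' (fun h => h α + Yact (h (op α)))
    (by intro a b; simp only [Pi.add_apply, map_add]; abel)

/-- The group `H_Γ` of an oriented skeleton `Γ = (E, op, nx, P)`: functions
`h : E → ℤ²` with `h(α) + X·h(nx α) + X²·h(nx² α) = 0` for all `α` and
`h(α) + Y·h(op α) = 0` for all heads `α ∈ P`. -/
def HGrp [DecidableEq E] (op nx : Equiv.Perm E) (P : Finset E) :
    AddSubgroup (E → ℤ × ℤ) :=
  (⨅ α : E, (condV nx α).ker) ⊓ (⨅ α ∈ P, (condE op α).ker)

/-!
Over `ℤ`, `H_Γ` is the kernel of the map `F : (ℤ²)^E → (ℤ²)^V × (ℤ²)^P` recording one vertex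
condition per `nx`-orbit (the other two are its images under powers of `X`) and one edge
condition per head.
As `|V| = |E|/3` and `|P| = |E|/2`, rank-nullity gives rank `|E|/3` once `F` has full rank, which
holds as soon as the transpose `Fᵀ` is injective, because then so is `F Fᵀ`.
If `Fᵀ(c, d) = 0`, then `f = Fᵀ(c, 0)` satisfies `f(nx β) = Xᵀ f(β)` and `f(op β) = ±Yᵀ f(β)`, so
along `op ∘ nx` it is transported by `±YᵀXᵀ`, where `YᵀXᵀ` is the shear `(a, b) ↦ (a, a + b)`.
Periodicity kills the first coordinate of `f`, and then `f(nx β) = Xᵀ f(β)` kills the second.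
-/

namespace Skeleton

def XactT : ℤ × ℤ →+ ℤ × ℤ :=
  AddMonoidHom.mk' (fun v => (-v.1 - v.2, v.1))
    (fun a b => by simp only [Prod.fst_add, Prod.snd_add, Prod.mk_add_mk]; congr 1; ring)

@[simp] lemma Xact_apply (v : ℤ × ℤ) : Xact v = (-v.1 + v.2, -v.1) := rfl
@[simp] lemma XactT_apply (v : ℤ × ℤ) : XactT v = (-v.1 - v.2, v.1) := rfl
@[simp] lemma Yact_apply (v : ℤ × ℤ) : Yact v = (-v.2, v.1) := rfl

lemma Xact_Xact_Xact (v : ℤ × ℤ) : Xact (Xact (Xact v)) = v := by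
  ext <;> simp

lemma Yact_Yact (v : ℤ × ℤ) : Yact (Yact v) = -v := by
  ext <;> simp

section Pairing

def dot (u v : ℤ × ℤ) : ℤ := u.1 * v.1 + u.2 * v.2

lemma dot_sum_left {κ : Type*} (s : Finset κ) (u : κ → ℤ × ℤ) (v : ℤ × ℤ) :
    dot (∑ k ∈ s, u k) v = ∑ k ∈ s, dot (u k) v := by
  simp only [dot, Prod.fst_sum, Prod.snd_sum, Finset.sum_mul, ← Finset.sum_add_distrib]

lemma eq_zero_of_dot_self_eq_zero {u : ℤ × ℤ} (h : dot u u = 0) : u = 0 := by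
  obtain ⟨h₁, h₂⟩ :=
    (add_eq_zero_iff_of_nonneg (mul_self_nonneg u.1) (mul_self_nonneg u.2)).mp h
  exact Prod.ext (mul_self_eq_zero.mp h₁) (mul_self_eq_zero.mp h₂)

variable {ι : Type*} [Fintype ι]

def pair (x y : ι → ℤ × ℤ) : ℤ := ∑ i, dot (x i) (y i)

lemma pair_add_right (x y z : ι → ℤ × ℤ) : pair x (y + z) = pair x y + pair x z := by
  simp only [pair, dot, Pi.add_apply, Prod.fst_add, Prod.snd_add, ← Finset.sum_add_distrib]
  congr 1; ext; ring

lemma pair_zero_left (y : ι → ℤ × ℤ) : pair 0 y = 0 := by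
  simp [pair, dot]

lemma eq_zero_of_pair_self_eq_zero {x : ι → ℤ × ℤ} (h : pair x x = 0) : x = 0 := by
  have hdot := (Finset.sum_eq_zero_iff_of_nonneg fun i _ =>
    add_nonneg (mul_self_nonneg (x i).1) (mul_self_nonneg (x i).2)).mp h
  exact funext fun i => eq_zero_of_dot_self_eq_zero (hdot i (Finset.mem_univ i))

end Pairing

section Rank

/-- Injectivity of `F ∘ G` forces `range F` to have full rank. -/
theorem finrank_ker_add_finrank_eq_of_injective_comp {R M N : Type*} [CommRing R] [IsDomain R]
    [AddCommGroup M] [Module R M] [Module.Finite R M] [AddCommGroup N] [Module R N]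
    [Module.Finite R N] (F : M →ₗ[R] N) (G : N →ₗ[R] M) (hFG : Function.Injective (F ∘ₗ G)) :
    Module.finrank R (LinearMap.ker F) + Module.finrank R N = Module.finrank R M := by
  have hrange : Module.finrank R (LinearMap.range F) = Module.finrank R N :=
    le_antisymm (Submodule.finrank_le _)
      ((LinearMap.finrank_range_of_inj hFG).symm.le.trans
        (Submodule.finrank_mono (LinearMap.range_comp_le_range G F)))
  rw [← hrange, ← F.quotKerEquivRange.finrank_eq, add_comm]
  exact Submodule.finrank_quotient_add_finrank _

variable {ι κ₁ κ₂ : Type*} [Fintype ι] [Fintype κ₁] [Fintype κ₂]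

lemma finrank_fun_int_prod : Module.finrank ℤ (ι → ℤ × ℤ) = 2 * Fintype.card ι := by
  simp [Module.finrank_pi_fintype, Module.finrank_prod, mul_comm]

/-- The transpose trick: `⟨F Fᵀ y, y⟩ = ⟨Fᵀ y, Fᵀ y⟩`. -/
lemma injective_prod_comp_coprod {F₁ : (ι → ℤ × ℤ) →ₗ[ℤ] κ₁ → ℤ × ℤ}
    {F₂ : (ι → ℤ × ℤ) →ₗ[ℤ] κ₂ → ℤ × ℤ} {G₁ : (κ₁ → ℤ × ℤ) →ₗ[ℤ] ι → ℤ × ℤ}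
    {G₂ : (κ₂ → ℤ × ℤ) →ₗ[ℤ] ι → ℤ × ℤ} (h₁ : ∀ x y, pair (F₁ x) y = pair x (G₁ y))
    (h₂ : ∀ x y, pair (F₂ x) y = pair x (G₂ y)) (hG : Function.Injective (G₁.coprod G₂)) :
    Function.Injective ((F₁.prod F₂) ∘ₗ (G₁.coprod G₂)) := by
  refine (injective_iff_map_eq_zero _).mpr fun y hy => hG ?_
  set x := G₁.coprod G₂ y
  have hF₁ : F₁ x = 0 := congrArg Prod.fst hy
  have hF₂ : F₂ x = 0 := congrArg Prod.snd hy
  have hx : pair x x = 0 :=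
    calc pair x x = pair (F₁ x) y.1 + pair (F₂ x) y.2 := by
          rw [h₁, h₂, ← pair_add_right]; rfl
      _ = 0 := by rw [hF₁, hF₂, pair_zero_left, pair_zero_left, add_zero]
  rw [eq_zero_of_pair_self_eq_zero hx, map_zero]

end Rank

section GatherScatter

variable {I : Type*} {n : ℕ} (e : I × Fin n ≃ E)

def gather (M : Fin n → ℤ × ℤ →+ ℤ × ℤ) : (E → ℤ × ℤ) →+ I → ℤ × ℤ :=
  AddMonoidHom.mk' (fun x i => ∑ k, M k (x (e (i, k))))
    (fun x y => by funext i; simp only [Pi.add_apply, map_add, Finset.sum_add_distrib])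

/-- The transpose of `gather e M` when `Mt k` is the transpose of `M k`. -/
def scatter (Mt : Fin n → ℤ × ℤ →+ ℤ × ℤ) : (I → ℤ × ℤ) →+ E → ℤ × ℤ :=
  AddMonoidHom.mk' (fun y β => Mt (e.symm β).2 (y (e.symm β).1))
    (fun y z => by funext β; simp only [Pi.add_apply, map_add])

lemma gather_apply (M : Fin n → ℤ × ℤ →+ ℤ × ℤ) (x : E → ℤ × ℤ) (i : I) :
    gather e M x i = ∑ k, M k (x (e (i, k))) := rfl

lemma scatter_apply_equiv (Mt : Fin n → ℤ × ℤ →+ ℤ × ℤ) (y : I → ℤ × ℤ) (p : I × Fin n) :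
    scatter e Mt y (e p) = Mt p.2 (y p.1) := by
  simp [scatter]

lemma pair_gather [Fintype I] [Fintype E] {M Mt : Fin n → ℤ × ℤ →+ ℤ × ℤ}
    (hM : ∀ k u v, dot (M k u) v = dot u (Mt k v)) (x : E → ℤ × ℤ) (y : I → ℤ × ℤ) :
    pair (gather e M x) y = pair x (scatter e Mt y) := by
  calc pair (gather e M x) y = ∑ p : I × Fin n, dot (x (e p)) (Mt p.2 (y p.1)) := by
        simp only [pair, gather_apply, dot_sum_left, hM, Fintype.sum_prod_type]
    _ = pair x (scatter e Mt y) := by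
        simp only [pair, ← scatter_apply_equiv e Mt y]
        exact e.sum_comp fun β => dot (x β) (scatter e Mt y β)

end GatherScatter

section Transversal

variable (σ : Equiv.Perm E) (S : Finset E) {n : ℕ}

def orbitMap (p : S × Fin n) : E := (σ ^ (p.2 : ℕ)) p.1

variable {σ S}

lemma orbitMap_add_one [NeZero n] (hσ : σ ^ n = 1) (s : S) (k : Fin n) :
    orbitMap σ S (s, k + 1) = σ (orbitMap σ S (s, k)) := by
  rw [orbitMap, orbitMap, Fin.val_add, Fin.val_one', Nat.add_mod_mod, ← pow_eq_pow_mod _ hσ,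
    pow_succ', Equiv.Perm.mul_apply]

lemma exists_bijective_orbitMap_three [Fintype E] (hσ : σ ^ 3 = 1) (hfix : ∀ β, σ β ≠ β) :
    ∃ R : Finset E, Function.Bijective (orbitMap σ R : R × Fin 3 → E) := by
  classical
  let rep : E → E := fun β => (⟦β⟧ : Quotient (Equiv.Perm.SameCycle.setoid σ)).out
  have hσ3 : ∀ β, σ (σ (σ β)) = β := fun β => by
    simpa [pow_succ, Equiv.Perm.mul_apply] using Equiv.Perm.congr_fun hσ β
  have hfix2 : ∀ β, σ (σ β) ≠ β := fun β h => hfix β (by simpa [h] using hσ3 β)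
  refine ⟨Finset.univ.image rep, ?_, fun β => ?_⟩
  · rintro ⟨⟨r, hr⟩, k⟩ ⟨⟨s, hs⟩, j⟩ h
    obtain ⟨a, -, rfl⟩ := Finset.mem_image.mp hr
    obtain ⟨b, -, rfl⟩ := Finset.mem_image.mp hs
    have hcyc : σ.SameCycle (rep a) (rep b) := by
      rw [← Equiv.Perm.sameCycle_pow_left (n := k), ← Equiv.Perm.sameCycle_pow_right (n := j)]
      rw [show (σ ^ (k : ℕ)) (rep a) = (σ ^ (j : ℕ)) (rep b) from h]
    have hab : rep a = rep b := congrArg Quotient.out (Quotient.out_equiv_out.mp hcyc)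
    have hkj : k = j := by
      simp only [orbitMap, hab] at h
      generalize rep b = r at h
      have hfix' : ∀ β, β ≠ σ β := fun β => (hfix β).symm
      have hfix2' : ∀ β, β ≠ σ (σ β) := fun β => (hfix2 β).symm
      fin_cases k <;> fin_cases j <;> simp_all [pow_succ]
    simp only [hab, hkj]
  · obtain ⟨i, hi, hβ⟩ := (Quotient.mk_out (s := Equiv.Perm.SameCycle.setoid σ) β).exists_pow_eq'
    have h3 : orderOf σ ≤ 3 := orderOf_le_of_pow_eq_one (by norm_num) hσ
    exact ⟨(⟨rep β, Finset.mem_image_of_mem rep (Finset.mem_univ β)⟩, ⟨i, by omega⟩), hβ⟩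

lemma bijective_orbitMap_two (hσ : σ ^ 2 = 1) (hS : ∀ a, a ∈ S ↔ σ a ∉ S) :
    Function.Bijective (orbitMap σ S : S × Fin 2 → E) := by
  have hσ2 : ∀ β, σ (σ β) = β := fun β => by
    simpa [sq, Equiv.Perm.mul_apply] using Equiv.Perm.congr_fun hσ β
  refine ⟨?_, fun β => ?_⟩
  · rintro ⟨⟨a, ha⟩, k⟩ ⟨⟨b, hb⟩, j⟩ h
    fin_cases k <;> fin_cases j <;> simp [orbitMap] at h ⊢
    · exact h
    · exact (hS b).mp hb (h ▸ ha)
    · exact (hS a).mp ha (h ▸ hb)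
    · exact h
  · by_cases hβ : β ∈ S
    · exact ⟨(⟨β, hβ⟩, 0), by simp [orbitMap]⟩
    · have hσβ : σ β ∈ S := (hS (σ β)).mpr (by rwa [hσ2])
      exact ⟨(⟨σ β, hσβ⟩, 1), by simp [orbitMap, hσ2]⟩

end Transversal

section Periodic

variable [Finite E]

/-- After `orderOf g` steps `f β` recurs, while the shear has added `orderOf g * (f β).1` to its
second coordinate (up to sign). -/
lemma fst_eq_zero_of_apply_eq_shear (g : Equiv.Perm E) {f : E → ℤ × ℤ}
    (hg : ∀ β, f (g β) = ((f β).1, (f β).1 + (f β).2) ∨ f (g β) = -((f β).1, (f β).1 + (f β).2))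
    (β : E) : (f β).1 = 0 := by
  rcases hβ : f β with ⟨a, b⟩
  have hiter : ∀ j : ℕ, f ((g ^ j) β) = (a, j * a + b) ∨ f ((g ^ j) β) = -(a, j * a + b) := by
    intro j
    induction j with
    | zero => simp [hβ]
    | succ j ih =>
      rw [pow_succ', Equiv.Perm.mul_apply]
      rcases hg ((g ^ j) β) with h | h <;> rcases ih with h' | h' <;> rw [h, h']
      · left; ext <;> simp; ring
      · right; ext <;> simp; ring
      · right; ext <;> simp; ring
      · left; ext <;> simp; ring
  show a = 0
  rcases hiter (orderOf g) with h | h <;>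
    rw [pow_orderOf_eq_one, Equiv.Perm.one_apply, hβ, Prod.ext_iff] at h
  · have hna : (orderOf g : ℤ) * a = 0 := by linarith [h.2]
    exact (mul_eq_zero.mp hna).resolve_left (Nat.cast_ne_zero.mpr (orderOf_pos g).ne')
  · have ha : a = -a := h.1
    linarith

lemma eq_zero_of_apply_nx_of_apply_op {nx op : Equiv.Perm E} {f : E → ℤ × ℤ}
    (hnx : ∀ β, f (nx β) = XactT (f β))
    (hop : ∀ β, f (op β) = Yact (f β) ∨ f (op β) = -Yact (f β)) : f = 0 := by
  have hshear : ∀ β, ((f β).1, (f β).1 + (f β).2) = -Yact (XactT (f β)) := fun β => by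
    ext <;> simp; ring
  have hfst : ∀ β, (f β).1 = 0 := fst_eq_zero_of_apply_eq_shear (op * nx) fun β => by
    rw [Equiv.Perm.mul_apply, hshear, neg_neg, ← hnx]
    exact (hop (nx β)).symm
  funext β
  refine Prod.ext (hfst β) ?_
  have h := hfst (nx β)
  rw [hnx, XactT_apply, hfst β] at h
  simpa using h

end Periodic

section Conditions

def vertexCoeffs : Fin 3 → ℤ × ℤ →+ ℤ × ℤ := ![AddMonoidHom.id _, Xact, Xact.comp Xact]

def vertexCoeffsT : Fin 3 → ℤ × ℤ →+ ℤ × ℤ := ![AddMonoidHom.id _, XactT, XactT.comp XactT]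

def edgeCoeffs : Fin 2 → ℤ × ℤ →+ ℤ × ℤ := ![AddMonoidHom.id _, Yact]

def edgeCoeffsT : Fin 2 → ℤ × ℤ →+ ℤ × ℤ := ![AddMonoidHom.id _, -Yact]

lemma dot_vertexCoeffs (k : Fin 3) (u v : ℤ × ℤ) :
    dot (vertexCoeffs k u) v = dot u (vertexCoeffsT k v) := by
  fin_cases k <;> simp [vertexCoeffs, vertexCoeffsT, dot] <;> ring

lemma dot_edgeCoeffs (k : Fin 2) (u v : ℤ × ℤ) :
    dot (edgeCoeffs k u) v = dot u (edgeCoeffsT k v) := by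
  fin_cases k <;> simp [edgeCoeffs, edgeCoeffsT, dot]; ring

lemma vertexCoeffsT_add_one (k : Fin 3) (v : ℤ × ℤ) :
    vertexCoeffsT (k + 1) v = XactT (vertexCoeffsT k v) := by
  fin_cases k <;> ext <;> simp [vertexCoeffsT]; ring

lemma condV_nx {nx : Equiv.Perm E} (hnx : nx ^ 3 = 1) (α : E) (x : E → ℤ × ℤ) :
    condV nx (nx α) x = Xact (Xact (condV nx α x)) := by
  have hnx3 : nx (nx (nx α)) = α := by
    simpa [pow_succ, Equiv.Perm.mul_apply] using Equiv.Perm.congr_fun hnx α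
  simp only [condV, AddMonoidHom.mk'_apply, map_add, hnx3, Xact_Xact_Xact]
  abel

variable {op nx : Equiv.Perm E} {R P : Finset E}
  (hR : Function.Bijective (orbitMap nx R : R × Fin 3 → E))
  (hPb : Function.Bijective (orbitMap op P : P × Fin 2 → E))

lemma gather_vertexCoeffs_apply (x : E → ℤ × ℤ) (r : R) :
    gather (Equiv.ofBijective _ hR) vertexCoeffs x r = condV nx r x := by
  simp [gather_apply, Fin.sum_univ_three, vertexCoeffs, orbitMap, condV, pow_two]

lemma gather_edgeCoeffs_apply (x : E → ℤ × ℤ) (a : P) :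
    gather (Equiv.ofBijective _ hPb) edgeCoeffs x a = condE op a x := by
  simp [gather_apply, edgeCoeffs, orbitMap, condE]

lemma toIntSubmodule_HGrp [DecidableEq E] (hnx : nx ^ 3 = 1) :
    AddSubgroup.toIntSubmodule (HGrp op nx P) =
      LinearMap.ker ((gather (Equiv.ofBijective _ hR) vertexCoeffs).toIntLinearMap.prod
        (gather (Equiv.ofBijective _ hPb) edgeCoeffs).toIntLinearMap) := by
  ext x
  change x ∈ HGrp op nx P ↔ _
  simp only [HGrp, AddSubgroup.mem_inf, AddSubgroup.mem_iInf,
    AddMonoidHom.mem_ker, LinearMap.ker_prod, Submodule.mem_inf, LinearMap.mem_ker,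
    AddMonoidHom.coe_toIntLinearMap, funext_iff, Pi.zero_apply, gather_vertexCoeffs_apply,
    gather_edgeCoeffs_apply, Subtype.forall]
  refine and_congr ⟨fun h r _ => h r, fun h α => ?_⟩ Iff.rfl
  obtain ⟨⟨⟨r, hr⟩, k⟩, rfl⟩ := hR.2 α
  fin_cases k <;> simp [orbitMap, pow_succ, condV_nx hnx, h r hr]

lemma injective_coprod_scatter [Finite E] (hnx : nx ^ 3 = 1) (hop : op ^ 2 = 1) :
    Function.Injective
      ((scatter (Equiv.ofBijective _ hR) vertexCoeffsT).toIntLinearMap.coprod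
        (scatter (Equiv.ofBijective _ hPb) edgeCoeffsT).toIntLinearMap) := by
  refine (injective_iff_map_eq_zero _).mpr ?_
  rintro ⟨c, d⟩ h
  set f := scatter (Equiv.ofBijective _ hR) vertexCoeffsT c
  have hfV (p : R × Fin 3) : f (orbitMap nx R p) = vertexCoeffsT p.2 (c p.1) :=
    scatter_apply_equiv (Equiv.ofBijective _ hR) _ c p
  have hfE (p : P × Fin 2) : f (orbitMap op P p) = -edgeCoeffsT p.2 (d p.1) := by
    rw [eq_neg_iff_add_eq_zero, ← scatter_apply_equiv (Equiv.ofBijective _ hPb) _ d p]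
    exact congrFun h _
  have hfnx (β : E) : f (nx β) = XactT (f β) := by
    obtain ⟨⟨r, k⟩, rfl⟩ := hR.2 β
    rw [← orbitMap_add_one hnx, hfV, hfV, vertexCoeffsT_add_one]
  have hfop (β : E) : f (op β) = Yact (f β) ∨ f (op β) = -Yact (f β) := by
    have hop2 : ∀ β, op (op β) = β := fun β => by
      simpa [sq, Equiv.Perm.mul_apply] using Equiv.Perm.congr_fun hop β
    obtain ⟨⟨a, k⟩, rfl⟩ := hPb.2 β
    have h₀ : f a = -d a := by simpa [orbitMap, edgeCoeffsT] using hfE (a, 0)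
    have h₁ : f (op a) = Yact (d a) := by simpa [orbitMap, edgeCoeffsT] using hfE (a, 1)
    have hhead : f (op a) = -Yact (f a) := by rw [h₁, h₀, map_neg, neg_neg]
    fin_cases k
    · right
      simpa [orbitMap] using hhead
    · left
      simp only [orbitMap, pow_one]
      rw [hop2, hhead, map_neg, Yact_Yact, neg_neg]
  have hf : f = 0 := eq_zero_of_apply_nx_of_apply_op hfnx hfop
  ext1
  · funext r
    simpa [hf, vertexCoeffsT] using (hfV (r, 0)).symm
  · funext a
    simpa [hf, edgeCoeffsT] using (hfE (a, 0)).symm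

lemma finrank_toIntSubmodule_HGrp [DecidableEq E] [Fintype E]
    (hR : Function.Bijective (orbitMap nx R : R × Fin 3 → E))
    (hPb : Function.Bijective (orbitMap op P : P × Fin 2 → E)) (hnx : nx ^ 3 = 1)
    (hop : op ^ 2 = 1) :
    Module.finrank ℤ (AddSubgroup.toIntSubmodule (HGrp op nx P)) +
      (2 * Fintype.card R + 2 * Fintype.card P) = 2 * Fintype.card E := by
  let eV := Equiv.ofBijective _ hR
  let eP := Equiv.ofBijective _ hPb
  have hFG := injective_prod_comp_coprod (F₁ := (gather eV vertexCoeffs).toIntLinearMap)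
    (F₂ := (gather eP edgeCoeffs).toIntLinearMap) (G₁ := (scatter eV vertexCoeffsT).toIntLinearMap)
    (G₂ := (scatter eP edgeCoeffsT).toIntLinearMap) (pair_gather eV dot_vertexCoeffs)
    (pair_gather eP dot_edgeCoeffs) (injective_coprod_scatter hR hPb hnx hop)
  have hrank := finrank_ker_add_finrank_eq_of_injective_comp _ _ hFG
  rwa [Module.finrank_prod, finrank_fun_int_prod, finrank_fun_int_prod, finrank_fun_int_prod,
    ← toIntSubmodule_HGrp hR hPb hnx] at hrank

end Conditions

end Skeleton

open Skeleton

theorem HGrp_free_of_rank_general [Fintype E] [DecidableEq E]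
    (op nx : Equiv.Perm E) (P : Finset E)
    (hop2 : op * op = 1)
    (hnx3 : nx * nx * nx = 1) (hnxf : ∀ α, nx α ≠ α)
    (hP : ∀ α, α ∈ P ↔ op α ∉ P) :
    Nonempty (Module.Basis (Fin (Fintype.card E / 3)) ℤ (HGrp op nx P)) := by
  have hnx : nx ^ 3 = 1 := by rwa [pow_three']
  have hop : op ^ 2 = 1 := by rwa [sq]
  obtain ⟨R, hR⟩ := exists_bijective_orbitMap_three hnx hnxf
  have hPb := bijective_orbitMap_two hop hP
  have hrank := finrank_toIntSubmodule_HGrp hR hPb hnx hop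
  have hcardR : Fintype.card E = Fintype.card R * 3 := by
    simpa using Fintype.card_congr (Equiv.ofBijective _ hR).symm
  have hcardP : Fintype.card E = Fintype.card P * 2 := by
    simpa using Fintype.card_congr (Equiv.ofBijective _ hPb).symm
  exact ⟨Module.finBasisOfFinrankEq ℤ (AddSubgroup.toIntSubmodule (HGrp op nx P)) (by omega)⟩

/-- `H_Γ` is free abelian of rank `|E| / 3`. -/
theorem HGrp_free_of_rank [Fintype E] [DecidableEq E] [Nonempty E]
    (op nx : Equiv.Perm E) (P : Finset E)
    (hop2 : op * op = 1) (hopf : ∀ α, op α ≠ α)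
    (hnx3 : nx * nx * nx = 1) (hnxf : ∀ α, nx α ≠ α)
    (hconn : ∀ a b : E, ∃ w ∈ Subgroup.closure ({op, nx} : Set (Equiv.Perm E)), w a = b)
    (hP : ∀ α, α ∈ P ↔ op α ∉ P) :
    Nonempty (Module.Basis (Fin (Fintype.card E / 3)) ℤ (HGrp op nx P)) :=
  HGrp_free_of_rank_general op nx P hop2 hnx3 hnxf hP
end
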